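/- Let α, β, c be real parameters. For every real polynomial p there exists a real polynomial q with deg q ≤ deg p + 1 such that for every x ≠ 0, (𝔕 p)(x) = q(x); that is, the raising operator 𝔕 maps any polynomial of degree n to a polynomial of degree at most n + 1. -/

import Mathlib

/-!
Clearing denominators, `x³ (𝔕 p)(x)` is the value at `x` of a polynomial `N p` of degree at
most `deg p + 4`, built from `p`, its reflection `p(-X)` and the Euler derivative `p' X`.
The ideal `(X³)` is stable under reflection and the Euler derivative, and on `1, X, X²` the
low-order terms of `S₁, S₂, T₁, T₂` cancel, so `X³ ∣ N p`; the quotient is the required `q`.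
-/

noncomputable section

/-- The raising operator `𝔕`: acts on `f` at `x ≠ 0` by
`S₁(x) f(x) + S₂(x) f(-x) + T₁(x) f'(x) - T₂(x) f'(-x)`. -/
noncomputable def Rop (α β c : ℝ) (f : ℝ → ℝ) (x : ℝ) : ℝ :=
  ((β * c - β - 2 * α) * x - (c + 2) * (c - 1)
      + (β - 2 * c ^ 2 + 2 * c ^ 2 * α - β * c) / x
      - c * (c - 1) / x ^ 2 + 2 * c ^ 2 / x ^ 3) * f x
    + ((β * c - β + 2 * c * α) * x + (c - 1) * (2 * c * α - c - 2 * β)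
      + (-β - 2 * c ^ 2 * α + β * c + 2 * c ^ 2) / x
      + c * (c - 1) / x ^ 2 - 2 * c ^ 2 / x ^ 3) * f (-x)
    + (2 * (x ^ 2 - 1) * (c ^ 2 - x ^ 2) / x ^ 2) * deriv f x
    - (2 * c * (1 + x) * (x - 1) ^ 2 * (x + c) / x ^ 2) * deriv f (-x)

open Polynomial

theorem X_pow_dvd_comp_neg_X {R : Type*} [CommRing R] {k : ℕ} {p : R[X]} (h : X ^ k ∣ p) :
    X ^ k ∣ p.comp (-X) := by
  obtain ⟨q, rfl⟩ := h
  rw [mul_comp, X_pow_comp]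
  exact dvd_mul_of_dvd_left (pow_dvd_pow_of_dvd (dvd_neg.mpr dvd_rfl) k) _

section EulerDerivative

variable {R : Type*} [Semiring R]

theorem X_pow_dvd_derivative_mul_X {k : ℕ} {p : R[X]} (h : X ^ k ∣ p) :
    X ^ k ∣ derivative p * X := by
  rw [X_pow_dvd_iff] at h ⊢
  intro d hd
  cases d with
  | zero => exact coeff_mul_X_zero _
  | succ n => rw [coeff_mul_X, coeff_derivative, h (n + 1) hd, zero_mul]

theorem degree_derivative_mul_X_le [Nontrivial R] (p : R[X]) :
    (derivative p * X).degree ≤ p.degree := by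
  rcases eq_or_ne p 0 with rfl | hp
  · simp
  · rw [degree_mul_X]
    exact Nat.WithBot.add_one_le_of_lt (degree_derivative_lt hp)

end EulerDerivative

namespace Raising

-- `s₁ = x³ S₁`, `s₂ = x³ S₂`, `t₁ = x² T₁`, `t₂ = x² T₂`.
def s₁ (α β c : ℝ) : ℝ[X] :=
  C (β * c - β - 2 * α) * X ^ 4 - C ((c + 2) * (c - 1)) * X ^ 3
    + C (β - 2 * c ^ 2 + 2 * c ^ 2 * α - β * c) * X ^ 2
    - C (c * (c - 1)) * X + C (2 * c ^ 2)

def s₂ (α β c : ℝ) : ℝ[X] :=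
  C (β * c - β + 2 * c * α) * X ^ 4 + C ((c - 1) * (2 * c * α - c - 2 * β)) * X ^ 3
    + C (-β - 2 * c ^ 2 * α + β * c + 2 * c ^ 2) * X ^ 2
    + C (c * (c - 1)) * X - C (2 * c ^ 2)

def t₁ (c : ℝ) : ℝ[X] := C 2 * (X ^ 2 - 1) * (C (c ^ 2) - X ^ 2)

def t₂ (c : ℝ) : ℝ[X] := C (2 * c) * (1 + X) * (X - 1) ^ 2 * (X + C c)

/-- `x³ (𝔕 p)(x)` as a polynomial in `x`; the term `-x³ T₂(x) p'(-x)` is written as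
`t₂(x) · (p' X)(-x)`. -/
def numerator (α β c : ℝ) (p : ℝ[X]) : ℝ[X] :=
  s₁ α β c * p + s₂ α β c * p.comp (-X) + t₁ c * (derivative p * X)
    + t₂ c * (derivative p * X).comp (-X)

variable (α β c : ℝ)

theorem Rop_eq_eval_numerator_div (p : ℝ[X]) {x : ℝ} (hx : x ≠ 0) :
    Rop α β c (fun t => p.eval t) x = (numerator α β c p).eval x / x ^ 3 := by
  simp only [Rop, Polynomial.deriv, numerator, s₁, s₂, t₁, t₂, eval_add, eval_sub, eval_mul,
    eval_comp, eval_pow, eval_neg, eval_X, eval_C, eval_one]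
  field_simp
  ring

theorem numerator_add (p q : ℝ[X]) :
    numerator α β c (p + q) = numerator α β c p + numerator α β c q := by
  simp only [numerator, derivative_add, add_mul, add_comp]
  ring

theorem numerator_C_mul (a : ℝ) (p : ℝ[X]) :
    numerator α β c (C a * p) = C a * numerator α β c p := by
  simp only [numerator, mul_comp, C_comp, derivative_C_mul]
  ring

theorem degree_numerator_le (p : ℝ[X]) : (numerator α β c p).degree ≤ 4 + p.degree := by
  have hs₁ : (s₁ α β c).degree ≤ 4 := by unfold s₁; compute_degree
  have hs₂ : (s₂ α β c).degree ≤ 4 := by unfold s₂; compute_degree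
  have ht₁ : (t₁ c).degree ≤ 4 := by unfold t₁; compute_degree
  have ht₂ : (t₂ c).degree ≤ 4 := by unfold t₂; compute_degree
  have hE := degree_derivative_mul_X_le p
  have hbound := degree_add_le_of_le
    (degree_add_le_of_le
      (degree_add_le_of_le (degree_mul_le_of_le hs₁ (le_refl p.degree))
        (degree_mul_le_of_le hs₂ (degree_comp_neg_X (p := p)).le))
      (degree_mul_le_of_le ht₁ hE))
    (degree_mul_le_of_le ht₂ (degree_comp_neg_X.trans_le hE))
  simpa only [numerator, max_self] using hbound

theorem X_pow_dvd_numerator {k : ℕ} {p : ℝ[X]} (h : X ^ k ∣ p) :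
    X ^ k ∣ numerator α β c p :=
  have hE := X_pow_dvd_derivative_mul_X h
  ((((h.mul_left _).add ((X_pow_dvd_comp_neg_X h).mul_left _)).add (hE.mul_left _)).add
    ((X_pow_dvd_comp_neg_X hE).mul_left _))

theorem numerator_one :
    numerator α β c 1 = X ^ 3 * (C (2 * β * c - 2 * β - 2 * α + 2 * α * c) * X
      + C (2 + 2 * α * c ^ 2 - 2 * β * c - 2 * c ^ 2 - 2 * α * c + 2 * β)) := by
  refine Polynomial.funext fun x => ?_
  simp only [numerator, s₁, s₂, t₁, t₂, derivative_one, zero_mul, eval_zero,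
    eval_add, eval_sub, eval_mul, eval_comp, eval_pow, eval_neg, eval_X, eval_C, eval_one]
  ring

theorem numerator_X :
    numerator α β c X = X ^ 3 * (C (-2 * α - 2 * α * c - 2 - 2 * c) * X ^ 2
      + C (-2 * c ^ 2 + 2 - 2 * α * c ^ 2 + 2 * β * c + 2 * α * c - 2 * β) * X
      + C (2 * β + 4 * α * c ^ 2 - 2 * β * c + 2 + 2 * c)) := by
  refine Polynomial.funext fun x => ?_
  simp only [numerator, s₁, s₂, t₁, t₂, derivative_X,
    eval_add, eval_sub, eval_mul, eval_comp, eval_pow, eval_neg, eval_X, eval_C, eval_one]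
  ring

theorem numerator_X_sq :
    numerator α β c (X ^ 2) =
      X ^ 3 * (C (2 * β * c - 2 * β - 2 * α + 2 * α * c - 4 + 4 * c) * X ^ 3
      + C (2 * c ^ 2 + 2 + 2 * α * c ^ 2 - 2 * β * c - 2 * α * c + 2 * β - 4 * c) * X ^ 2
      + C (4 - 4 * c) * X + C (-4 * c ^ 2 + 4 * c)) := by
  refine Polynomial.funext fun x => ?_
  simp only [numerator, s₁, s₂, t₁, t₂, derivative_X_sq,
    eval_add, eval_sub, eval_mul, eval_comp, eval_pow, eval_neg, eval_X, eval_C, eval_one]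
  ring

theorem X_pow_three_dvd_numerator_X_pow (n : ℕ) : X ^ 3 ∣ numerator α β c (X ^ n) := by
  rcases lt_or_ge n 3 with hn | hn
  · interval_cases n
    · rw [pow_zero, numerator_one]; exact dvd_mul_right _ _
    · rw [pow_one, numerator_X]; exact dvd_mul_right _ _
    · rw [numerator_X_sq]; exact dvd_mul_right _ _
  · exact X_pow_dvd_numerator α β c (pow_dvd_pow X hn)

theorem X_pow_three_dvd_numerator (p : ℝ[X]) : X ^ 3 ∣ numerator α β c p := by
  induction p using Polynomial.induction_on' with
  | add p q hp hq => rw [numerator_add]; exact hp.add hq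
  | monomial n a =>
    rw [← C_mul_X_pow_eq_monomial, numerator_C_mul]
    exact (X_pow_three_dvd_numerator_X_pow α β c n).mul_left _

end Raising

open Raising in
/-- The raising operator `𝔕` maps any polynomial of degree `n` to a polynomial
of degree at most `n + 1`. -/
theorem R_raises_degree_by_one (α β c : ℝ) (p : Polynomial ℝ) :
    ∃ q : Polynomial ℝ, q.degree ≤ p.degree + 1 ∧
      ∀ x : ℝ, x ≠ 0 → Rop α β c (fun t => p.eval t) x = q.eval x := by
  obtain ⟨q, hq⟩ := X_pow_three_dvd_numerator α β c p
  refine ⟨q, ?_, fun x hx => ?_⟩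
  · have hdeg := degree_numerator_le α β c p
    rw [hq, degree_mul, degree_X_pow] at hdeg
    refine WithBot.le_of_add_le_add_left WithBot.coe_ne_bot (hdeg.trans_eq ?_)
    rw [add_comm p.degree, ← add_assoc]
    rfl
  · rw [Rop_eq_eval_numerator_div α β c p hx, hq, eval_mul, eval_pow, eval_X,
      mul_div_cancel_left₀ _ (pow_ne_zero 3 hx)]
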